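/- Let (Z, 𝒵) be a measurable space, let ν and ν' be probability measures on Z both absolutely continuous with respect to a sigma-finite measure υ, and let f : Z → ℝ be measurable with f ∈ L²(ν) ∩ L²(ν'). Then |∫ f dν − ∫ f dν'| ≤ 2 · (∫ f² dν + ∫ f² dν')^{1/2} · D_H(ν, ν'), where D_H denotes the Hellinger distance D_H(ν,ν')² = (1/2) ∫ (√(dν/dυ) − √(dν'/dυ))² dυ. -/

import Mathlib

/-!
With `p`, `q` the densities of `ν`, `ν'` with respect to `υ`, the difference of the integrals is
`∫ f (√p + √q) (√p - √q) dυ`. Cauchy–Schwarz in `L²(υ)` bounds it by the product of the norms of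
the two factors; the second one is `√2 · D_H(ν, ν')` by definition, and since
`(√p + √q)² ≤ 2 (p + q)` the first one is at most `√(2 (∫ f² dν + ∫ f² dν'))`.
-/

open MeasureTheory Real

/-- Hellinger distance of two measures w.r.t. a dominating measure `υ`. -/
noncomputable def hellingerDist {Z : Type*} [MeasurableSpace Z]
    (ν ν' υ : Measure Z) : ℝ :=
  Real.sqrt ((1 / 2) * ∫ z, (Real.sqrt ((ν.rnDeriv υ z).toReal) -
    Real.sqrt ((ν'.rnDeriv υ z).toReal)) ^ 2 ∂υ)

section L2

variable {α : Type*} [MeasurableSpace α] {μ : Measure α} {a b : α → ℝ}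

theorem abs_integral_mul_le_sqrt_mul_sqrt (ha : MemLp a 2 μ) (hb : MemLp b 2 μ) :
    |∫ x, a x * b x ∂μ| ≤ √(∫ x, a x ^ 2 ∂μ) * √(∫ x, b x ^ 2 ∂μ) := by
  have hpow (c : α → ℝ) : ∫ x, ‖c x‖ ^ (2 : ℝ) ∂μ = ∫ x, c x ^ 2 ∂μ := by
    simp only [rpow_two, norm_eq_abs, sq_abs]
  calc |∫ x, a x * b x ∂μ| ≤ ∫ x, ‖a x‖ * ‖b x‖ ∂μ := by
        rw [← norm_eq_abs]
        simpa only [norm_mul] using norm_integral_le_integral_norm (fun x => a x * b x)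
    _ ≤ (∫ x, ‖a x‖ ^ (2 : ℝ) ∂μ) ^ (1 / (2 : ℝ)) * (∫ x, ‖b x‖ ^ (2 : ℝ) ∂μ) ^ (1 / (2 : ℝ)) :=
        integral_mul_norm_le_Lp_mul_Lq HolderConjugate.two_two (by simpa using ha)
          (by simpa using hb)
    _ = √(∫ x, a x ^ 2 ∂μ) * √(∫ x, b x ^ 2 ∂μ) := by
        rw [hpow, hpow, sqrt_eq_rpow, sqrt_eq_rpow]

theorem integral_add_sq_le (ha : MemLp a 2 μ) (hb : MemLp b 2 μ) :
    ∫ x, (a x + b x) ^ 2 ∂μ ≤ 2 * (∫ x, a x ^ 2 ∂μ + ∫ x, b x ^ 2 ∂μ) := by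
  rw [← integral_add ha.integrable_sq hb.integrable_sq, ← integral_const_mul]
  exact integral_mono (ha.add hb).integrable_sq
    ((ha.integrable_sq.add hb.integrable_sq).const_mul 2)
    fun x => by nlinarith [sq_nonneg (a x - b x)]

end L2

section SqrtRnDeriv

variable {Z : Type*} [MeasurableSpace Z] {ν ν' υ : Measure Z}

noncomputable def sqrtRnDeriv (ν υ : Measure Z) (z : Z) : ℝ := √(ν.rnDeriv υ z).toReal

theorem sq_sqrtRnDeriv (z : Z) : sqrtRnDeriv ν υ z ^ 2 = (ν.rnDeriv υ z).toReal :=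
  sq_sqrt ENNReal.toReal_nonneg

theorem measurable_sqrtRnDeriv : Measurable (sqrtRnDeriv ν υ) :=
  (Measure.measurable_rnDeriv ν υ).ennreal_toReal.sqrt

theorem memLp_sqrtRnDeriv [IsFiniteMeasure ν] : MemLp (sqrtRnDeriv ν υ) 2 υ :=
  (memLp_two_iff_integrable_sq measurable_sqrtRnDeriv.aestronglyMeasurable).2 <| by
    simpa only [sq_sqrtRnDeriv] using Measure.integrable_toReal_rnDeriv

theorem hellingerDist_nonneg : 0 ≤ hellingerDist ν ν' υ :=
  sqrt_nonneg _

theorem integral_sqrtRnDeriv_sub_sq :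
    ∫ z, (sqrtRnDeriv ν υ z - sqrtRnDeriv ν' υ z) ^ 2 ∂υ = 2 * hellingerDist ν ν' υ ^ 2 := by
  have h : hellingerDist ν ν' υ =
      √((1 / 2) * ∫ z, (sqrtRnDeriv ν υ z - sqrtRnDeriv ν' υ z) ^ 2 ∂υ) := rfl
  rw [h, sq_sqrt (by positivity)]
  ring

variable [SigmaFinite ν] [ν.HaveLebesgueDecomposition υ] {f : Z → ℝ}

theorem integral_mul_sqrtRnDeriv_sq (hν : ν ≪ υ) :
    ∫ z, (f z * sqrtRnDeriv ν υ z) ^ 2 ∂υ = ∫ z, f z ^ 2 ∂ν := by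
  simp_rw [mul_pow, sq_sqrtRnDeriv, mul_comm (f _ ^ 2)]
  exact integral_toReal_rnDeriv_mul hν

theorem memLp_mul_sqrtRnDeriv (hν : ν ≪ υ) (hf : AEStronglyMeasurable f υ) (hf2 : MemLp f 2 ν) :
    MemLp (fun z => f z * sqrtRnDeriv ν υ z) 2 υ := by
  refine (memLp_two_iff_integrable_sq
    (hf.mul measurable_sqrtRnDeriv.aestronglyMeasurable)).2 ?_
  simp only [Pi.mul_apply, mul_pow, sq_sqrtRnDeriv, mul_comm (f _ ^ 2)]
  exact (integrable_toReal_rnDeriv_mul_iff hν).2 hf2.integrable_sq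

theorem integral_sub_integral_eq_integral_mul_sqrtRnDeriv_sub [SigmaFinite ν']
    [ν'.HaveLebesgueDecomposition υ] (hν : ν ≪ υ) (hν' : ν' ≪ υ) (hf : Integrable f ν)
    (hf' : Integrable f ν') :
    ∫ z, f z ∂ν - ∫ z, f z ∂ν' =
      ∫ z, (f z * sqrtRnDeriv ν υ z + f z * sqrtRnDeriv ν' υ z) *
        (sqrtRnDeriv ν υ z - sqrtRnDeriv ν' υ z) ∂υ := by
  rw [← integral_toReal_rnDeriv_mul hν, ← integral_toReal_rnDeriv_mul hν',
    ← integral_sub ((integrable_toReal_rnDeriv_mul_iff hν).2 hf)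
      ((integrable_toReal_rnDeriv_mul_iff hν').2 hf')]
  congr with z
  rw [← sq_sqrtRnDeriv, ← sq_sqrtRnDeriv]
  ring

end SqrtRnDeriv

theorem stmt0 {Z : Type*} [MeasurableSpace Z]
    (ν ν' υ : Measure Z) [IsProbabilityMeasure ν] [IsProbabilityMeasure ν']
    [SigmaFinite υ] (hν : ν ≪ υ) (hν' : ν' ≪ υ)
    (f : Z → ℝ) (hf : Measurable f)
    (hf2 : MemLp f 2 ν) (hf2' : MemLp f 2 ν') :
    |(∫ z, f z ∂ν) - ∫ z, f z ∂ν'| ≤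
      2 * Real.sqrt ((∫ z, (f z) ^ 2 ∂ν) + ∫ z, (f z) ^ 2 ∂ν') *
        hellingerDist ν ν' υ := by
  have hu := memLp_mul_sqrtRnDeriv hν hf.aestronglyMeasurable hf2
  have hv := memLp_mul_sqrtRnDeriv hν' hf.aestronglyMeasurable hf2'
  rw [integral_sub_integral_eq_integral_mul_sqrtRnDeriv_sub hν hν'
    (hf2.integrable one_le_two) (hf2'.integrable one_le_two)]
  calc _ ≤ √(∫ z, (f z * sqrtRnDeriv ν υ z + f z * sqrtRnDeriv ν' υ z) ^ 2 ∂υ) *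
        √(∫ z, (sqrtRnDeriv ν υ z - sqrtRnDeriv ν' υ z) ^ 2 ∂υ) :=
        abs_integral_mul_le_sqrt_mul_sqrt (hu.add hv) (memLp_sqrtRnDeriv.sub memLp_sqrtRnDeriv)
    _ ≤ √(2 * (∫ z, f z ^ 2 ∂ν + ∫ z, f z ^ 2 ∂ν')) * √(2 * hellingerDist ν ν' υ ^ 2) := by
        rw [integral_sqrtRnDeriv_sub_sq]
        gcongr
        simpa only [integral_mul_sqrtRnDeriv_sq hν, integral_mul_sqrtRnDeriv_sq hν'] using
          integral_add_sq_le hu hv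
    _ = 2 * √(∫ z, f z ^ 2 ∂ν + ∫ z, f z ^ 2 ∂ν') * hellingerDist ν ν' υ := by
        rw [sqrt_mul zero_le_two, sqrt_mul zero_le_two, sqrt_sq hellingerDist_nonneg]
        linear_combination √(∫ z, f z ^ 2 ∂ν + ∫ z, f z ^ 2 ∂ν') * hellingerDist ν ν' υ *
          mul_self_sqrt zero_le_two
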